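/- Non-Lipschitz example for the ergodic corrector: let Ω = (0,1), and suppose χ ∈ C²((0,1)) satisfies −b(x)χ'(x) − a(x)χ''(x) − l(x) = c on (0,1), where a is smooth with a > 0 on (0,1), a(x) = x^{2β} near 0 and a(x) = (1−x)^{2β} near 1 with 2β > 1; b is smooth with b(0) = b(1) = 0 and b(x) ≥ k x^γ near 0, b(x) ≤ −k(1−x)^γ near 1 for some k > 0, 0 < γ < 2β−1; l is smooth with l(0) ≠ l(1). Then χ is not Lipschitz-continuous on (0,1), i.e. χ' is unbounded. -/

import Mathlib

open Set Metric Filter MeasureTheory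
open scoped BigOperators Topology ENNReal

noncomputable section

/-- Euclidean space `ℝ^N`. -/
abbrev Euc (N : ℕ) := EuclideanSpace ℝ (Fin N)

/-- The `i`-th first-order partial derivative. -/
noncomputable def pd {N : ℕ} (u : Euc N → ℝ) (x : Euc N) (i : Fin N) : ℝ :=
  fderiv ℝ u x (EuclideanSpace.single i 1)

/-- The `(i,j)` second-order partial derivative. -/
noncomputable def pd2 {N : ℕ} (u : Euc N → ℝ) (x : Euc N) (i j : Fin N) : ℝ :=
  fderiv ℝ (fun y => fderiv ℝ u y (EuclideanSpace.single j 1)) x (EuclideanSpace.single i 1)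

/-- Homogeneous Bellman operator
`F[u](x) = sup_α ( -b(x,α)·Du(x) - tr(a(x,α) D²u(x)) )`. -/
noncomputable def Fop {N : ℕ} {A : Type*} (b : Euc N → A → Fin N → ℝ)
    (a : Euc N → A → Fin N → Fin N → ℝ) (u : Euc N → ℝ) (x : Euc N) : ℝ :=
  ⨆ α : A, (-(∑ i, b x α i * pd u x i) - ∑ i, ∑ j, a x α i j * pd2 u x i j)

/-- Hamilton-Jacobi-Bellman operator
`H[u](x) = sup_α ( -b(x,α)·Du(x) - tr(a(x,α) D²u(x)) - l(x,α) )`. -/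
noncomputable def Hop {N : ℕ} {A : Type*} (b : Euc N → A → Fin N → ℝ)
    (a : Euc N → A → Fin N → Fin N → ℝ) (l : Euc N → A → ℝ) (u : Euc N → ℝ) (x : Euc N) : ℝ :=
  ⨆ α : A, (-(∑ i, b x α i * pd u x i) - ∑ i, ∑ j, a x α i j * pd2 u x i j - l x α)


open Set Metric Filter MeasureTheory
open scoped BigOperators Topology ENNReal

/-- Auxiliary blow-up lemma near `0`. -/
lemma aux15 (β L q ε : ℝ) (hβ : 1 < 2 * β) (hq : q ≠ 0) (hε : 0 < ε) (hL : 0 ≤ L)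
    (g h : ℝ → ℝ)
    (hgdiff : ∀ x ∈ Set.Ioo (0:ℝ) ε, DifferentiableAt ℝ g x)
    (hgd : ∀ x ∈ Set.Ioo (0:ℝ) ε, deriv g x = h x / x ^ (2 * β))
    (hgbd : ∀ x ∈ Set.Ioo (0:ℝ) ε, |g x| ≤ L)
    (hh : ∀ x ∈ Set.Ioo (0:ℝ) ε, |h x - q| ≤ |q| / 2) : False := by
  set s : ℝ := if 0 < q then 1 else -1 with hs_def
  have hqpos : 0 < |q| := abs_pos.2 hq
  have hsabs : |s| = 1 := by
    rcases lt_or_ge 0 q with h' | h'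
    · rw [hs_def, if_pos h']; norm_num
    · rw [hs_def, if_neg (not_lt.2 h')]; norm_num
  have hsh : ∀ x ∈ Set.Ioo (0:ℝ) ε, |q| / 2 ≤ s * h x := by
    intro x hx
    have h12 := abs_sub_le_iff.1 (hh x hx)
    rcases lt_or_ge 0 q with hq' | hq'
    · have habs : |q| = q := abs_of_pos hq'
      rw [hs_def, if_pos hq', one_mul]
      linarith [h12.1, h12.2]
    · have hq'' : q < 0 := lt_of_le_of_ne hq' hq
      have habs : |q| = -q := abs_of_neg hq''
      rw [hs_def, if_neg (not_lt.2 hq'), neg_one_mul]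
      linarith [h12.1, h12.2]
  set K : ℝ := |q| / (2 * (2 * β - 1)) with hK_def
  have hbne : (2 * (2 * β - 1) : ℝ) ≠ 0 := by nlinarith
  have hK : 0 < K := div_pos hqpos (by linarith)
  set ψ : ℝ → ℝ := fun t => s * g t + K * t ^ (1 - 2 * β) with hψ_def
  have hψderiv : ∀ t ∈ Set.Ioo (0:ℝ) ε, HasDerivAt ψ
      (s * deriv g t + K * ((1 - 2 * β) * t ^ (1 - 2 * β - 1))) t := by
    intro t ht
    exact ((hgdiff t ht).hasDerivAt.const_mul s).add
      ((Real.hasDerivAt_rpow_const (Or.inl (ne_of_gt ht.1))).const_mul K)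
  have h2 : K * (1 - 2 * β) = -(|q| / 2) := by
    rw [hK_def, div_mul_eq_mul_div, div_eq_iff hbne]
    ring
  have hψnonneg : ∀ t ∈ Set.Ioo (0:ℝ) ε, 0 ≤ deriv ψ t := by
    intro t ht
    rw [(hψderiv t ht).deriv]
    have htpos : (0:ℝ) < t := ht.1
    have hpow : (0:ℝ) < t ^ (2 * β) := Real.rpow_pos_of_pos htpos _
    have h1 : t ^ (1 - 2 * β - 1) = (t ^ (2 * β))⁻¹ := by
      rw [show (1 - 2*β - 1 : ℝ) = -(2*β) by ring, Real.rpow_neg htpos.le]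
    rw [hgd t ht, h1]
    have heq : s * (h t / t ^ (2*β)) + K * ((1 - 2*β) * (t ^ (2*β))⁻¹)
        = (s * h t + K * (1 - 2*β)) / t ^ (2*β) := by
      field_simp
    rw [heq, h2]
    apply div_nonneg _ hpow.le
    linarith [hsh t ht]
  set y0 : ℝ := ε / 2 with hy0_def
  have hy0 : y0 ∈ Set.Ioo (0:ℝ) ε := ⟨by positivity, by rw [hy0_def]; linarith⟩
  have key : ∀ x ∈ Set.Ioo (0:ℝ) y0, x ^ (1 - 2*β) ≤ 2 * L / K + y0 ^ (1 - 2*β) := by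
    intro x hx
    have hsub : Set.Icc x y0 ⊆ Set.Ioo (0:ℝ) ε := fun t ht =>
      ⟨lt_of_lt_of_le hx.1 ht.1, lt_of_le_of_lt ht.2 hy0.2⟩
    have hmono : MonotoneOn ψ (Set.Icc x y0) := by
      apply monotoneOn_of_deriv_nonneg (convex_Icc _ _)
      · intro t ht
        exact ((hψderiv t (hsub ht)).differentiableAt).continuousAt.continuousWithinAt
      · intro t ht
        rw [interior_Icc] at ht
        exact ((hψderiv t (hsub (Set.Ioo_subset_Icc_self ht))).differentiableAt).differentiableWithinAt
      · intro t ht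
        rw [interior_Icc] at ht
        exact hψnonneg t (hsub (Set.Ioo_subset_Icc_self ht))
    have hxy : x ≤ y0 := hx.2.le
    have hψle : s * g x + K * x ^ (1-2*β) ≤ s * g y0 + K * y0 ^ (1-2*β) :=
      hmono (Set.left_mem_Icc.2 hxy) (Set.right_mem_Icc.2 hxy) hxy
    have hx' : x ∈ Set.Ioo (0:ℝ) ε := hsub (Set.left_mem_Icc.2 hxy)
    have hb1 : |s * g x| ≤ L := by rw [abs_mul, hsabs, one_mul]; exact hgbd x hx'
    have hb2 : |s * g y0| ≤ L := by rw [abs_mul, hsabs, one_mul]; exact hgbd y0 hy0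
    have hb1' := abs_le.1 hb1
    have hb2' := abs_le.1 hb2
    have h3 : x ^ (1-2*β) ≤ (2*L + K * y0 ^ (1-2*β)) / K := by
      rw [le_div_iff₀ hK]
      nlinarith [hb1'.1, hb2'.2]
    calc x ^ (1-2*β) ≤ (2*L + K * y0 ^ (1-2*β)) / K := h3
      _ = 2*L/K + y0 ^ (1-2*β) := by field_simp
  have hblow : Filter.Tendsto (fun x : ℝ => x ^ (1 - 2*β)) (nhdsWithin 0 (Set.Ioi 0)) Filter.atTop := by
    have h1 : Filter.Tendsto (fun x : ℝ => (x⁻¹) ^ (2*β - 1)) (nhdsWithin 0 (Set.Ioi 0)) Filter.atTop :=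
      (tendsto_rpow_atTop (by linarith)).comp tendsto_inv_nhdsGT_zero
    apply h1.congr'
    filter_upwards [self_mem_nhdsWithin] with x (hx : (0:ℝ) < x)
    rw [Real.inv_rpow hx.le, ← Real.rpow_neg hx.le, show -(2*β-1) = 1-2*β from by ring]
  have hev : ∀ᶠ x in nhdsWithin (0:ℝ) (Set.Ioi 0),
      2 * L / K + y0 ^ (1 - 2*β) < x ^ (1 - 2*β) :=
    hblow.eventually_gt_atTop _
  have hev2 : ∀ᶠ x in nhdsWithin (0:ℝ) (Set.Ioi 0), x ∈ Set.Ioo (0:ℝ) y0 :=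
    Ioo_mem_nhdsGT_of_mem ⟨le_refl _, hy0.1⟩
  obtain ⟨x, hx1, hx2⟩ := (hev.and hev2).exists
  exact absurd (key x hx2) (not_le.2 hx1)

/-- Filter version of the blow-up lemma. -/
lemma aux15' (β L q ε : ℝ) (hβ : 1 < 2 * β) (hq : q ≠ 0) (hε : 0 < ε) (hL : 0 ≤ L)
    (g B Λ : ℝ → ℝ)
    (hgdiff : ∀ x ∈ Set.Ioo (0:ℝ) ε, DifferentiableAt ℝ g x)
    (hgd : ∀ x ∈ Set.Ioo (0:ℝ) ε, deriv g x = (B x * g x + Λ x) / x ^ (2 * β))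
    (hgbd : ∀ x ∈ Set.Ioo (0:ℝ) ε, |g x| ≤ L)
    (hB : Filter.Tendsto B (nhdsWithin 0 (Set.Ioi 0)) (nhds 0))
    (hΛ : Filter.Tendsto Λ (nhdsWithin 0 (Set.Ioi 0)) (nhds q)) : False := by
  have hqpos : 0 < |q| := abs_pos.2 hq
  have hLpos : (0:ℝ) < L + 1 := by linarith
  have hev1 : ∀ᶠ x in nhdsWithin (0:ℝ) (Set.Ioi 0), |B x| < |q| / (4 * (L + 1)) := by
    have := Metric.tendsto_nhds.1 hB (|q| / (4 * (L + 1))) (by positivity)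
    simpa [Real.dist_eq] using this
  have hev2 : ∀ᶠ x in nhdsWithin (0:ℝ) (Set.Ioi 0), |Λ x - q| < |q| / 4 := by
    have := Metric.tendsto_nhds.1 hΛ (|q| / 4) (by positivity)
    simpa [Real.dist_eq] using this
  obtain ⟨ε0, hε0, hball⟩ := Metric.nhdsWithin_basis_ball.eventually_iff.1 (hev1.and hev2)
  set ε' : ℝ := min ε ε0 with hε'_def
  have hε' : 0 < ε' := lt_min hε hε0
  have hsub : Set.Ioo (0:ℝ) ε' ⊆ Set.Ioo 0 ε := fun x hx =>
    ⟨hx.1, lt_of_lt_of_le hx.2 (min_le_left _ _)⟩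
  apply aux15 β L q ε' hβ hq hε' hL g (fun x => B x * g x + Λ x)
    (fun x hx => hgdiff x (hsub hx)) (fun x hx => hgd x (hsub hx))
    (fun x hx => hgbd x (hsub hx))
  intro x hx
  have hx0 : (0:ℝ) < x := hx.1
  have hdx : dist x (0:ℝ) < ε0 := by
    rw [Real.dist_eq, sub_zero, abs_of_pos hx0]
    exact lt_of_lt_of_le hx.2 (min_le_right _ _)
  obtain ⟨hB', hΛ'⟩ := hball ⟨Metric.mem_ball.2 hdx, hx0⟩
  have hgx := hgbd x (hsub hx)
  have h1 : |B x * g x| ≤ |q| / 4 := by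
    rw [abs_mul]
    have : |B x| * |g x| ≤ (|q| / (4 * (L + 1))) * (L + 1) := by
      apply mul_le_mul hB'.le (by linarith) (abs_nonneg _) (by positivity)
    calc |B x| * |g x| ≤ (|q| / (4 * (L + 1))) * (L + 1) := this
      _ = |q| / 4 := by field_simp
  calc |B x * g x + Λ x - q| = |B x * g x + (Λ x - q)| := by rw [add_sub_assoc]
    _ ≤ |B x * g x| + |Λ x - q| := abs_add_le _ _
    _ ≤ |q| / 4 + |q| / 4 := by linarith
    _ = |q| / 2 := by ring


/-- non-Lipschitz example for the 1D ergodic corrector. -/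
theorem statement15 (β : ℝ) (hβ : 1 < 2 * β) (a b l : ℝ → ℝ)
    (ha_smooth : ContDiff ℝ (⊤ : ℕ∞) a) (hb_smooth : ContDiff ℝ (⊤ : ℕ∞) b) (hl_smooth : ContDiff ℝ (⊤ : ℕ∞) l)
    (ha_pos : ∀ x ∈ Set.Ioo (0 : ℝ) 1, 0 < a x)
    (ha_form : ∃ ε > (0 : ℝ), (∀ x ∈ Set.Ioo (0 : ℝ) ε, a x = x ^ (2 * β)) ∧
      ∀ x ∈ Set.Ioo (1 - ε) (1 : ℝ), a x = (1 - x) ^ (2 * β))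
    (hb0 : b 0 = 0) (hb1 : b 1 = 0) (hl01 : l 0 ≠ l 1)
    (hdeg : ∃ δ > (0 : ℝ), ∃ k > (0 : ℝ), ∃ γ : ℝ, 0 < γ ∧ γ < 2 * β - 1 ∧
      (∀ x ∈ Set.Ioo (0 : ℝ) δ, k * x ^ γ ≤ b x) ∧
      ∀ x ∈ Set.Ioo (1 - δ) (1 : ℝ), b x ≤ -k * (1 - x) ^ γ)
    (c : ℝ) (χ : ℝ → ℝ) (hχ : ContDiffOn ℝ 2 χ (Set.Ioo 0 1))
    (hODE : ∀ x ∈ Set.Ioo (0 : ℝ) 1,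
      -b x * deriv χ x - a x * deriv (deriv χ) x - l x = c) :
    ¬ ∃ L : NNReal, LipschitzOnWith L χ (Set.Ioo 0 1) := by
  rintro ⟨L, hLip⟩
  obtain ⟨ε, hε, haf0, haf1⟩ := ha_form
  set g := deriv χ with hg_def
  have hg1 : ContDiffOn ℝ 1 g (Set.Ioo 0 1) := hχ.deriv_of_isOpen isOpen_Ioo (by norm_num)
  have hgdiff : ∀ x ∈ Set.Ioo (0:ℝ) 1, DifferentiableAt ℝ g x := fun x hx =>
    (hg1.differentiableOn one_ne_zero).differentiableAt (isOpen_Ioo.mem_nhds hx)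
  have hχdiff : ∀ x ∈ Set.Ioo (0:ℝ) 1, DifferentiableAt ℝ χ x := fun x hx =>
    (hχ.differentiableOn (by norm_num)).differentiableAt (isOpen_Ioo.mem_nhds hx)
  have hL0 : (0:ℝ) ≤ (L:ℝ) := L.coe_nonneg
  have hgbd : ∀ x ∈ Set.Ioo (0:ℝ) 1, |g x| ≤ (L:ℝ) := by
    intro x hx
    have hd := (hχdiff x hx).hasDerivAt
    have h1 := hd.hasFDerivAt.le_of_lipschitzOn (isOpen_Ioo.mem_nhds hx) hLip
    have h2 : ‖ContinuousLinearMap.toSpanSingleton ℝ (g x)‖ = |g x| := by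
      simp
    rw [h2] at h1
    exact h1
  have hcase : l 0 + c ≠ 0 ∨ l 1 + c ≠ 0 := by
    by_contra hcon
    push_neg at hcon
    exact hl01 (by linarith [hcon.1, hcon.2])
  set ε1 : ℝ := min ε 1 with hε1_def
  have hε1 : 0 < ε1 := lt_min hε one_pos
  have hε1le1 : ε1 ≤ 1 := min_le_right _ _
  have hε1leε : ε1 ≤ ε := min_le_left _ _
  rcases hcase with h0 | h1
  · -- blow-up near 0
    apply aux15' β L (-(l 0 + c)) ε1 hβ (neg_ne_zero.2 h0) hε1 hL0 g
      (fun x => -b x) (fun x => -l x - c)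
    · intro x hx
      exact hgdiff x ⟨hx.1, lt_of_lt_of_le hx.2 hε1le1⟩
    · intro x hx
      have hx01 : x ∈ Set.Ioo (0:ℝ) 1 := ⟨hx.1, lt_of_lt_of_le hx.2 hε1le1⟩
      have hode := hODE x hx01
      have hax : a x = x ^ (2*β) := haf0 x ⟨hx.1, lt_of_lt_of_le hx.2 hε1leε⟩
      have hpow : (0:ℝ) < x ^ (2*β) := Real.rpow_pos_of_pos hx.1 _
      rw [hax] at hode
      rw [eq_div_iff (ne_of_gt hpow)]
      linear_combination -hode
    · intro x hx
      exact hgbd x ⟨hx.1, lt_of_lt_of_le hx.2 hε1le1⟩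
    · have hcb : Filter.Tendsto (fun x => -b x) (nhds (0:ℝ)) (nhds (-b 0)) :=
        (hb_smooth.continuous.neg).continuousAt
      rw [hb0, neg_zero] at hcb
      exact hcb.mono_left nhdsWithin_le_nhds
    · have hcl : Filter.Tendsto (fun x => -l x - c) (nhds (0:ℝ)) (nhds (-l 0 - c)) :=
        ((hl_smooth.continuous.neg).sub continuous_const).continuousAt
      rw [show (-l 0 - c : ℝ) = -(l 0 + c) by ring] at hcl
      exact hcl.mono_left nhdsWithin_le_nhds
  · -- blow-up near 1, after reflection
    apply aux15' β L (l 1 + c) ε1 hβ h1 hε1 hL0 (fun y => g (1 - y))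
      (fun y => b (1 - y)) (fun y => l (1 - y) + c)
    · intro y hy
      have hmem : (1 - y) ∈ Set.Ioo (0:ℝ) 1 := by
        constructor
        · linarith [hy.2, hε1le1]
        · linarith [hy.1]
      exact (hgdiff (1-y) hmem).comp y ((differentiable_id.differentiableAt).const_sub 1)
    · intro y hy
      have hmem : (1 - y) ∈ Set.Ioo (0:ℝ) 1 := by
        constructor
        · linarith [hy.2, hε1le1]
        · linarith [hy.1]
      have hf : HasDerivAt (fun z : ℝ => 1 - z) (-1) y := by
        simpa using (hasDerivAt_id y).const_sub 1
      have hcomp : HasDerivAt (fun z => g (1 - z)) (deriv g (1-y) * (-1)) y :=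
        (hgdiff (1-y) hmem).hasDerivAt.comp y hf
      have hode := hODE (1-y) hmem
      have hax : a (1-y) = (1 - (1-y)) ^ (2*β) := by
        apply haf1 (1-y)
        constructor
        · linarith [hy.2, hε1leε]
        · linarith [hy.1]
      rw [show (1 - (1 - y) : ℝ) = y by ring] at hax
      have hpow : (0:ℝ) < y ^ (2*β) := Real.rpow_pos_of_pos hy.1 _
      rw [hax] at hode
      rw [hcomp.deriv, eq_div_iff (ne_of_gt hpow)]
      linear_combination hode
    · intro y hy
      have hmem : (1 - y) ∈ Set.Ioo (0:ℝ) 1 := by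
        constructor
        · linarith [hy.2, hε1le1]
        · linarith [hy.1]
      exact hgbd (1-y) hmem
    · have hcb : Filter.Tendsto (fun y : ℝ => b (1 - y)) (nhds (0:ℝ)) (nhds (b (1 - 0))) :=
        (hb_smooth.continuous.comp (continuous_const.sub continuous_id)).continuousAt
      rw [show ((1:ℝ) - 0) = 1 by ring, hb1] at hcb
      exact hcb.mono_left nhdsWithin_le_nhds
    · have hcl : Filter.Tendsto (fun y : ℝ => l (1 - y) + c) (nhds (0:ℝ)) (nhds (l (1 - 0) + c)) :=
        ((hl_smooth.continuous.comp (continuous_const.sub continuous_id)).add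
          continuous_const).continuousAt
      rw [show ((1:ℝ) - 0) = 1 by ring] at hcl
      exact hcl.mono_left nhdsWithin_le_nhds
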